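/- The octonion loop O_L satisfies the Moufang identity (x·y)·(z·x) = (x·(y·z))·x for all x, y, z ∈ O_L, whereas the quasi-octonion loop Õ_L does not: there exist x, y, z ∈ Õ_L with (x·y)·(z·x) ≠ (x·(y·z))·x. In particular O_L and Õ_L are not isomorphic. -/

import Mathlib

/-- Iterated Cayley–Dickson doubling starting from `ℝ`. -/
def CD : ℕ → Type
  | 0 => ℝ
  | n + 1 => CD n × CD n

instance cdAddCommGroup : ∀ n, AddCommGroup (CD n)
  | 0 => inferInstanceAs (AddCommGroup ℝ)
  | n + 1 => letI := cdAddCommGroup n; inferInstanceAs (AddCommGroup (CD n × CD n))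

noncomputable instance cdModule : ∀ n, Module ℝ (CD n)
  | 0 => inferInstanceAs (Module ℝ ℝ)
  | n + 1 => letI := cdModule n; inferInstanceAs (Module ℝ (CD n × CD n))

/-- Cayley–Dickson conjugation, starting from the identity on `ℝ`. -/
def cdConj : ∀ n, CD n → CD n
  | 0, x => x
  | n + 1, x => (cdConj n x.1, -x.2)

/-- Cayley–Dickson multiplication: `(a,b)(c,d) = (ac − d b̄, ā d + c b)`. -/
def cdMul : ∀ n, CD n → CD n → CD n
  | 0, x, y => @Mul.mul ℝ _ x y
  | n + 1, x, y =>
      (cdMul n x.1 y.1 - cdMul n y.2 (cdConj n x.2),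
       cdMul n (cdConj n x.1) y.2 + cdMul n y.1 x.2)

instance cdMulInst (n : ℕ) : Mul (CD n) := ⟨cdMul n⟩

instance cdOne : ∀ n, One (CD n)
  | 0 => ⟨(1 : ℝ)⟩
  | n + 1 => letI := cdOne n; ⟨((1 : CD n), 0)⟩

/-- The standard basis elements: under a doubling step `A → A × A`, a basis element
`e k` of `A` gives `e k = (e k, 0)` and `e (k + dim A) = (0, e k)`. -/
def cdE : ∀ n, ℕ → CD n
  | 0, _ => (1 : ℝ)
  | n + 1, k => if k < 2 ^ n then (cdE n k, 0) else (0, cdE n (k - 2 ^ n))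

/-- The trigintaduonions: the 32-dimensional real Cayley–Dickson algebra. -/
abbrev TT := CD 5

/-- The 32 standard basis elements `e 0 = 1, e 1, …, e 31` of `𝕋`. -/
def e (i : ℕ) : TT := cdE 5 i

/-- The trigintaduonion loop `T_L = {±e 0, ±e 1, …, ±e 31}`. -/
def TL : Set TT := {x | ∃ i < 32, x = e i ∨ x = -e i}

/-- A subloop of `T_L`: a nonempty subset of `T_L` closed under multiplication. -/
def IsSubloop (N : Set TT) : Prop :=
  N ⊆ TL ∧ N.Nonempty ∧ ∀ x ∈ N, ∀ y ∈ N, x * y ∈ N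

/-- Two subsets of `T_L` are isomorphic (as loops) if some bijection between them
preserves multiplication. -/
def LoopIso (A B : Set TT) : Prop :=
  ∃ f : TT → TT, Set.BijOn f A B ∧ ∀ x ∈ A, ∀ y ∈ A, f (x * y) = f x * f y

/-- The standard sedenion loop `S_L = {±e i : 0 ≤ i ≤ 15}`. -/
def SL : Set TT := {x | ∃ i < 16, x = e i ∨ x = -e i}

/-- Index set of the α-sedenion loop. -/
def idxα : Set ℕ := {0, 1, 2, 3, 8, 9, 10, 11, 20, 21, 22, 23, 28, 29, 30, 31}

/-- Index set of the β-sedenion loop. -/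
def idxβ : Set ℕ := {0, 1, 2, 3, 12, 13, 14, 15, 20, 21, 22, 23, 24, 25, 26, 27}

/-- Index set of the γ-sedenion loop. -/
def idxγ : Set ℕ := {0, 1, 2, 3, 4, 5, 6, 7, 24, 25, 26, 27, 28, 29, 30, 31}

/-- The α-sedenion loop `S_L^α`. -/
def SLα : Set TT := {x | ∃ i ∈ idxα, x = e i ∨ x = -e i}

/-- The β-sedenion loop `S_L^β`. -/
def SLβ : Set TT := {x | ∃ i ∈ idxβ, x = e i ∨ x = -e i}

/-- The γ-sedenion loop `S_L^γ`. -/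
def SLγ : Set TT := {x | ∃ i ∈ idxγ, x = e i ∨ x = -e i}

/-- The octonion loop `O_L = {±e i : 0 ≤ i ≤ 7}`. -/
def OL : Set TT := {x | ∃ i < 8, x = e i ∨ x = -e i}

/-- The quasi-octonion loop `Õ_L = {±e i : i ∈ {0,1,2,3,12,13,14,15}}`. -/
def QOL : Set TT :=
  {x | ∃ i ∈ ({0, 1, 2, 3, 12, 13, 14, 15} : Set ℕ), x = e i ∨ x = -e i}


/-!
All structure constants of the Cayley–Dickson algebras in the standard basis are integers:
running the doubling over `ℤ` gives a model that maps multiplicatively onto `CD n`, and in it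
identities between basis elements are decided by evaluation. For `O_L` this is done in the
octonions `CD 3`, which sit in `𝕋` through `a ↦ ((a, 0), 0)`; signs do not matter because
`(-x) y = -(x y) = x (-y)`. In `Õ_L` the identity fails at `x = e₁, y = e₂, z = e₁₂`, and a
multiplicative bijection from the multiplicatively closed `O_L` onto `Õ_L` would carry the
identity over.
-/

def IsMoufang {M : Type*} [Mul M] (S : Set M) : Prop :=
  ∀ x ∈ S, ∀ y ∈ S, ∀ z ∈ S, x * y * (z * x) = x * (y * z) * x

theorem IsMoufang.of_surjOn {M N : Type*} [Mul M] [Mul N] {A : Set M} {B : Set N} {f : M → N}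
    (hf : Set.SurjOn f A B) (hmul : ∀ x ∈ A, ∀ y ∈ A, f (x * y) = f x * f y)
    (hA : ∀ x ∈ A, ∀ y ∈ A, x * y ∈ A) (hM : IsMoufang A) : IsMoufang B := by
  intro _ hx' _ hy' _ hz'
  obtain ⟨x, hx, rfl⟩ := hf hx'
  obtain ⟨y, hy, rfl⟩ := hf hy'
  obtain ⟨z, hz, rfl⟩ := hf hz'
  rw [← hmul x hx y hy, ← hmul z hz x hx, ← hmul _ (hA x hx y hy) _ (hA z hz x hx),
    ← hmul y hy z hz, ← hmul x hx _ (hA y hy z hz), ← hmul _ (hA x hx _ (hA y hy z hz)) x hx,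
    hM x hx y hy z hz]

def signedSet {M ι : Type*} [Neg M] (b : ι → M) (p : ι → Prop) : Set M :=
  {x | ∃ i, p i ∧ (x = b i ∨ x = -b i)}

section SignedSet

variable {M ι : Type*} [Mul M] [HasDistribNeg M] {b : ι → M} {p : ι → Prop}

theorem isMoufang_signedSet
    (h : ∀ i, p i → ∀ j, p j → ∀ k, p k → b i * b j * (b k * b i) = b i * (b j * b k) * b i) :
    IsMoufang (signedSet b p) := by
  rintro x ⟨i, hi, rfl | rfl⟩ y ⟨j, hj, rfl | rfl⟩ z ⟨k, hk, rfl | rfl⟩ <;>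
    simpa only [neg_mul, mul_neg, neg_neg, neg_inj] using h i hi j hj k hk

theorem mul_mem_signedSet
    (h : ∀ i, p i → ∀ j, p j → ∃ m, p m ∧ (b i * b j = b m ∨ b i * b j = -b m)) :
    ∀ x ∈ signedSet b p, ∀ y ∈ signedSet b p, x * y ∈ signedSet b p := by
  rintro x ⟨i, hi, rfl | rfl⟩ y ⟨j, hj, rfl | rfl⟩ <;>
    obtain ⟨m, hm, hij | hij⟩ := h i hi j hj <;>
    exact ⟨m, hm, by simp [hij]⟩

end SignedSet

namespace CD

theorem conj_neg : ∀ {n} (x : CD n), cdConj n (-x) = -cdConj n x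
  | 0, _ => rfl
  | _ + 1, x => Prod.ext (conj_neg x.1) rfl

theorem conj_zero : ∀ n, cdConj n 0 = 0
  | 0 => rfl
  | n + 1 => Prod.ext (conj_zero n) neg_zero

theorem neg_mul_and_mul_neg : ∀ {n} (x y : CD n), -x * y = -(x * y) ∧ x * -y = -(x * y)
  | 0, x, y => ⟨neg_mul (show ℝ from x) (show ℝ from y), mul_neg (show ℝ from x) (show ℝ from y)⟩
  | n + 1, x, y => by
    have h (a b : CD n) := neg_mul_and_mul_neg a b
    refine ⟨Prod.ext ?_ ?_, Prod.ext ?_ ?_⟩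
    · show -x.1 * y.1 - y.2 * cdConj n (-x.2) = -(x.1 * y.1 - y.2 * cdConj n x.2)
      rw [conj_neg, (h _ _).1, (h _ _).2]; abel
    · show cdConj n (-x.1) * y.2 + y.1 * -x.2 = -(cdConj n x.1 * y.2 + y.1 * x.2)
      rw [conj_neg, (h _ _).1, (h _ _).2]; abel
    · show x.1 * -y.1 - -y.2 * cdConj n x.2 = -(x.1 * y.1 - y.2 * cdConj n x.2)
      rw [(h _ _).1, (h _ _).2]; abel
    · show cdConj n x.1 * -y.2 + -y.1 * x.2 = -(cdConj n x.1 * y.2 + y.1 * x.2)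
      rw [(h _ _).1, (h _ _).2]; abel

instance instHasDistribNeg (n : ℕ) : HasDistribNeg (CD n) :=
  { (inferInstance : InvolutiveNeg (CD n)) with
    neg_mul := fun x y => (neg_mul_and_mul_neg x y).1
    mul_neg := fun x y => (neg_mul_and_mul_neg x y).2 }

theorem zero_mul_and_mul_zero : ∀ {n} (x : CD n), 0 * x = 0 ∧ x * 0 = 0
  | 0, x => ⟨zero_mul (show ℝ from x), mul_zero (show ℝ from x)⟩
  | n + 1, x => by
    have h (a : CD n) := zero_mul_and_mul_zero a
    refine ⟨Prod.ext ?_ ?_, Prod.ext ?_ ?_⟩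
    · show 0 * x.1 - x.2 * cdConj n 0 = 0
      rw [conj_zero, (h _).1, (h _).2, sub_zero]
    · show cdConj n 0 * x.2 + x.1 * 0 = 0
      rw [conj_zero, (h _).1, (h _).2, add_zero]
    · show x.1 * 0 - 0 * cdConj n x.2 = 0
      rw [(h _).1, (h _).2, sub_zero]
    · show cdConj n x.1 * 0 + 0 * x.2 = 0
      rw [(h _).1, (h _).2, add_zero]

instance instMulZeroClass (n : ℕ) : MulZeroClass (CD n) where
  zero_mul x := (zero_mul_and_mul_zero x).1
  mul_zero x := (zero_mul_and_mul_zero x).2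

def inl {n : ℕ} (a : CD n) : CD (n + 1) := (a, 0)

theorem inl_mul {n : ℕ} (a b : CD n) : inl (a * b) = inl a * inl b := by
  show ((a * b, 0) : CD (n + 1)) = (a * b - 0 * cdConj n 0, cdConj n a * 0 + b * 0)
  rw [zero_mul, mul_zero, mul_zero, sub_zero, add_zero]

theorem inl_neg {n : ℕ} (a : CD n) : inl (-a) = -inl a :=
  Prod.ext rfl neg_zero.symm

theorem inl_injective {n : ℕ} : Function.Injective (inl (n := n)) :=
  fun _ _ h => congrArg Prod.fst h

theorem cdE_succ_of_lt {n i : ℕ} (h : i < 2 ^ n) : cdE (n + 1) i = inl (cdE n i) :=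
  if_pos h

end CD

def ZCD : ℕ → Type
  | 0 => ℤ
  | n + 1 => ZCD n × ZCD n

namespace ZCD

instance instDecidableEq : ∀ n, DecidableEq (ZCD n)
  | 0 => inferInstanceAs (DecidableEq ℤ)
  | n + 1 => letI := instDecidableEq n; inferInstanceAs (DecidableEq (ZCD n × ZCD n))

instance instZero : ∀ n, Zero (ZCD n)
  | 0 => inferInstanceAs (Zero ℤ)
  | n + 1 => letI := instZero n; inferInstanceAs (Zero (ZCD n × ZCD n))

instance instNeg : ∀ n, Neg (ZCD n)
  | 0 => inferInstanceAs (Neg ℤ)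
  | n + 1 => letI := instNeg n; inferInstanceAs (Neg (ZCD n × ZCD n))

instance instAdd : ∀ n, Add (ZCD n)
  | 0 => inferInstanceAs (Add ℤ)
  | n + 1 => letI := instAdd n; inferInstanceAs (Add (ZCD n × ZCD n))

instance instSub : ∀ n, Sub (ZCD n)
  | 0 => inferInstanceAs (Sub ℤ)
  | n + 1 => letI := instSub n; inferInstanceAs (Sub (ZCD n × ZCD n))

def conj : ∀ n, ZCD n → ZCD n
  | 0, x => x
  | n + 1, x => (conj n x.1, -x.2)

def mul : ∀ n, ZCD n → ZCD n → ZCD n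
  | 0, x, y => (show ℤ from x) * (show ℤ from y)
  | n + 1, x, y => (mul n x.1 y.1 - mul n y.2 (conj n x.2), mul n (conj n x.1) y.2 + mul n y.1 x.2)

instance instMul (n : ℕ) : Mul (ZCD n) := ⟨mul n⟩

def basis : ∀ n, ℕ → ZCD n
  | 0, _ => (1 : ℤ)
  | n + 1, k => if k < 2 ^ n then (basis n k, 0) else (0, basis n (k - 2 ^ n))

def toCD : ∀ n, ZCD n → CD n
  | 0, x => ((show ℤ from x : ℤ) : ℝ)
  | n + 1, x => (toCD n x.1, toCD n x.2)

theorem toCD_injective : ∀ n, Function.Injective (toCD n)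
  | 0 => fun _ _ h => Int.cast_injective (α := ℝ) h
  | n + 1 => fun _ _ h =>
    Prod.ext (toCD_injective n (congrArg Prod.fst h)) (toCD_injective n (congrArg Prod.snd h))

theorem toCD_zero : ∀ n, toCD n 0 = 0
  | 0 => Int.cast_zero (R := ℝ)
  | n + 1 => Prod.ext (toCD_zero n) (toCD_zero n)

theorem toCD_neg : ∀ {n} (x : ZCD n), toCD n (-x) = -toCD n x
  | 0, x => Int.cast_neg (R := ℝ) (show ℤ from x)
  | _ + 1, x => Prod.ext (toCD_neg x.1) (toCD_neg x.2)

theorem toCD_add : ∀ {n} (x y : ZCD n), toCD n (x + y) = toCD n x + toCD n y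
  | 0, x, y => Int.cast_add (R := ℝ) (show ℤ from x) (show ℤ from y)
  | _ + 1, x, y => Prod.ext (toCD_add x.1 y.1) (toCD_add x.2 y.2)

theorem toCD_sub : ∀ {n} (x y : ZCD n), toCD n (x - y) = toCD n x - toCD n y
  | 0, x, y => Int.cast_sub (R := ℝ) (show ℤ from x) (show ℤ from y)
  | _ + 1, x, y => Prod.ext (toCD_sub x.1 y.1) (toCD_sub x.2 y.2)

theorem toCD_conj : ∀ {n} (x : ZCD n), toCD n (conj n x) = cdConj n (toCD n x)
  | 0, _ => rfl
  | _ + 1, x => Prod.ext (toCD_conj x.1) (toCD_neg x.2)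

theorem toCD_mul : ∀ {n} (x y : ZCD n), toCD n (x * y) = toCD n x * toCD n y
  | 0, x, y => Int.cast_mul (α := ℝ) (show ℤ from x) (show ℤ from y)
  | n + 1, x, y => by
    show (toCD n (x.1 * y.1 - y.2 * conj n x.2), toCD n (conj n x.1 * y.2 + y.1 * x.2)) =
      (toCD n x.1 * toCD n y.1 - toCD n y.2 * cdConj n (toCD n x.2),
       cdConj n (toCD n x.1) * toCD n y.2 + toCD n y.1 * toCD n x.2)
    rw [toCD_sub, toCD_add, toCD_mul, toCD_mul, toCD_mul, toCD_mul, toCD_conj, toCD_conj]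

theorem toCD_basis : ∀ n k, toCD n (basis n k) = cdE n k
  | 0, _ => Int.cast_one (R := ℝ)
  | n + 1, k => by
    by_cases h : k < 2 ^ n
    · have hb : basis (n + 1) k = (basis n k, 0) := if_pos h
      have he : cdE (n + 1) k = (cdE n k, 0) := if_pos h
      rw [hb, he]
      exact Prod.ext (toCD_basis n k) (toCD_zero n)
    · have hb : basis (n + 1) k = (0, basis n (k - 2 ^ n)) := if_neg h
      have he : cdE (n + 1) k = (0, cdE n (k - 2 ^ n)) := if_neg h
      rw [hb, he]
      exact Prod.ext (toCD_zero n) (toCD_basis n _)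

end ZCD

theorem exists_cdE_three_mul_eq : ∀ i < 8, ∀ j < 8, ∃ m < 8,
    cdE 3 i * cdE 3 j = cdE 3 m ∨ cdE 3 i * cdE 3 j = -cdE 3 m := by
  have h : ∀ i < 8, ∀ j < 8, ∃ m < 8,
      ZCD.basis 3 i * ZCD.basis 3 j = ZCD.basis 3 m ∨
        ZCD.basis 3 i * ZCD.basis 3 j = -ZCD.basis 3 m := by
    decide +kernel
  intro i hi j hj
  obtain ⟨m, hm, hij⟩ := h i hi j hj
  refine ⟨m, hm, ?_⟩
  simpa only [← ZCD.toCD_basis, ← ZCD.toCD_mul, ← ZCD.toCD_neg, (ZCD.toCD_injective 3).eq_iff]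
    using hij

theorem cdE_three_moufang : ∀ i < 8, ∀ j < 8, ∀ k < 8,
    cdE 3 i * cdE 3 j * (cdE 3 k * cdE 3 i) = cdE 3 i * (cdE 3 j * cdE 3 k) * cdE 3 i := by
  have h : ∀ i < 8, ∀ j < 8, ∀ k < 8,
      ZCD.basis 3 i * ZCD.basis 3 j * (ZCD.basis 3 k * ZCD.basis 3 i) =
        ZCD.basis 3 i * (ZCD.basis 3 j * ZCD.basis 3 k) * ZCD.basis 3 i := by
    decide +kernel
  intro i hi j hj k hk
  simpa only [ZCD.toCD_basis, ZCD.toCD_mul] using congrArg (ZCD.toCD 3) (h i hi j hj k hk)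

theorem e_one_two_twelve_not_moufang : e 1 * e 2 * (e 12 * e 1) ≠ e 1 * (e 2 * e 12) * e 1 := by
  have h : ZCD.basis 5 1 * ZCD.basis 5 2 * (ZCD.basis 5 12 * ZCD.basis 5 1) ≠
      ZCD.basis 5 1 * (ZCD.basis 5 2 * ZCD.basis 5 12) * ZCD.basis 5 1 := by
    decide +kernel
  refine fun heq => h (ZCD.toCD_injective 5 ?_)
  simp only [ZCD.toCD_mul, ZCD.toCD_basis]
  exact heq

theorem e_eq_inl_inl {i : ℕ} (h : i < 8) : e i = CD.inl (CD.inl (cdE 3 i)) := by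
  rw [e, CD.cdE_succ_of_lt (by omega), CD.cdE_succ_of_lt (by omega)]

theorem exists_e_mul_e_eq : ∀ i < 8, ∀ j < 8, ∃ m < 8, e i * e j = e m ∨ e i * e j = -e m := by
  intro i hi j hj
  obtain ⟨m, hm, hij⟩ := exists_cdE_three_mul_eq i hi j hj
  refine ⟨m, hm, ?_⟩
  simp only [e_eq_inl_inl, hi, hj, hm, ← CD.inl_mul, ← CD.inl_neg, CD.inl_injective.eq_iff]
  exact hij

theorem e_moufang : ∀ i < 8, ∀ j < 8, ∀ k < 8,
    e i * e j * (e k * e i) = e i * (e j * e k) * e i := by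
  intro i hi j hj k hk
  simp only [e_eq_inl_inl, hi, hj, hk, ← CD.inl_mul]
  rw [cdE_three_moufang i hi j hj k hk]

/-- `O_L` satisfies the Moufang identity `(x·y)·(z·x) = (x·(y·z))·x` while `Õ_L` does
not; in particular `O_L` and `Õ_L` are not isomorphic. -/
theorem stmt12 :
    (∀ x ∈ OL, ∀ y ∈ OL, ∀ z ∈ OL, (x * y) * (z * x) = (x * (y * z)) * x) ∧
    (∃ x ∈ QOL, ∃ y ∈ QOL, ∃ z ∈ QOL, (x * y) * (z * x) ≠ (x * (y * z)) * x) ∧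
    ¬ LoopIso OL QOL := by
  have hOL : IsMoufang OL := isMoufang_signedSet e_moufang
  have h1 : e 1 ∈ QOL := ⟨1, by simp, Or.inl rfl⟩
  have h2 : e 2 ∈ QOL := ⟨2, by simp, Or.inl rfl⟩
  have h12 : e 12 ∈ QOL := ⟨12, by simp, Or.inl rfl⟩
  refine ⟨hOL, ⟨e 1, h1, e 2, h2, e 12, h12, e_one_two_twelve_not_moufang⟩, ?_⟩
  rintro ⟨f, hf, hmul⟩
  exact e_one_two_twelve_not_moufang <|
    hOL.of_surjOn hf.surjOn hmul (mul_mem_signedSet exists_e_mul_e_eq) _ h1 _ h2 _ h12
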